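/- Let l be odd and w ∈ V. Then level([w,A]) = l+1 and level([w,A]) < level([w,B]) (i.e. l+1 is the first level of w) if and only if level([w,A]) > l, level([w,B]) > l (undefined levels counting as > l), and there exists a node [v,B] with level([v,B]) = l and ([v,B],[w,A]) ∈ E_M. In this case the shortest strongly simple paths from s to [w,A] are exactly the shortest strongly simple paths from s to such nodes [v,B] each followed by the edge ([v,B],[w,A]). -/

import Mathlib

variable {V : Type*}

/-- `M` is a matching of the simple graph `G`: a set of edges of `G`,
no two of which share a node. -/
def IsMatchingOn (G : SimpleGraph V) (M : Set (Sym2 V)) : Prop :=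
  M ⊆ G.edgeSet ∧ ∀ e ∈ M, ∀ f ∈ M, ∀ v : V, v ∈ e → v ∈ f → e = f

/-- A node is `M`-free if it is incident to no edge of `M`. -/
def MFree (M : Set (Sym2 V)) (v : V) : Prop := ∀ e ∈ M, v ∉ e

/-- The two labels `A` and `B`. -/
inductive Lbl where
  | A : Lbl
  | B : Lbl

/-- The opposite label: `Ā = B` and `B̄ = A`. -/
def Lbl.flip : Lbl → Lbl
  | .A => .B
  | .B => .A

/-- Nodes of the directed graph `G_M`: the nodes `[v,A]`, `[v,B]` for `v ∈ V`
together with two new nodes `s` and `t`. -/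
inductive GMNode (V : Type*) where
  | inner : V → Lbl → GMNode V
  | s : GMNode V
  | t : GMNode V

/-- The directed adjacency of `G_M`: the edges `([v,A],[w,B])` and
`([w,A],[v,B])` for `(v,w) ∈ M`; the edges `([x,B],[y,A])` and `([y,B],[x,A])`
for `(x,y) ∈ E ∖ M`; and the edges `(s,[v,B])` and `([v,A],t)` for every
`M`-free node `v`. -/
def gmAdj (G : SimpleGraph V) (M : Set (Sym2 V)) : GMNode V → GMNode V → Prop
  | .inner v .A, .inner w .B => s(v, w) ∈ M
  | .inner x .B, .inner y .A => s(x, y) ∈ G.edgeSet \ M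
  | .s, .inner v .B => MFree M v
  | .inner v .A, .t => MFree M v
  | _, _ => False

/-- `p` is a directed path from `u` to `v` with respect to the relation `R`. -/
def IsDirPath {α : Type*} (R : α → α → Prop) (p : List α) (u v : α) : Prop :=
  p.Chain' R ∧ p.head? = some u ∧ p.getLast? = some v

/-- A list of nodes of `G_M` is strongly simple if it has no repeated node and
contains, for each `v ∈ V`, at most one of the two nodes `[v,A]`, `[v,B]`. -/
def StronglySimple (p : List (GMNode V)) : Prop :=
  p.Nodup ∧ ∀ v : V, ¬(GMNode.inner v .A ∈ p ∧ GMNode.inner v .B ∈ p)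

/-- The level of a node of `G_M`: the length of a shortest strongly simple path
from `s` to it (`⊤` if there is no such path, i.e. the level is undefined). -/
noncomputable def gmLevel (G : SimpleGraph V) (M : Set (Sym2 V)) (x : GMNode V) : ℕ∞ :=
  sInf ((fun p : List (GMNode V) => ((p.length - 1 : ℕ) : ℕ∞)) ''
    {p : List (GMNode V) | IsDirPath (gmAdj G M) p GMNode.s x ∧ StronglySimple p})

/-- `p` is a shortest strongly simple path from `s` to `x` in `G_M`. -/
def IsShortestSSP (G : SimpleGraph V) (M : Set (Sym2 V)) (p : List (GMNode V))
    (x : GMNode V) : Prop :=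
  IsDirPath (gmAdj G M) p GMNode.s x ∧ StronglySimple p ∧
    gmLevel G M x = ((p.length - 1 : ℕ) : ℕ∞)

/-! Every edge of `G_M` joins an `A`-node to a `B`-node, so `A`-levels are even and `B`-levels
odd. A strongly simple path of length `n` from `s` to `[v,B]`, followed by the edge
`([v,B],[w,A])`, stays strongly simple as soon as `[w,A]` and `[w,B]` both have level `> n`,
because then neither lies on the path. Hence the last edge of a shortest path to `[w,A]` leaves a
`B`-node of level exactly one less, and conversely; parity rules out `level([w,B]) = l + 1`. -/

namespace IsDirPath

variable {α : Type*} {R : α → α → Prop} {p : List α} {u v : α}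

theorem ne_nil (hp : IsDirPath R p u v) : p ≠ [] := by
  rintro rfl
  simp [IsDirPath] at hp

theorem concat (hp : IsDirPath R p u v) {w : α} (h : R v w) : IsDirPath R (p ++ [w]) u w := by
  obtain ⟨hc, hh, hl⟩ := hp
  refine ⟨hc.append (List.isChain_singleton w) ?_, ?_, List.getLast?_concat⟩
  · simp [hl, h]
  · rwa [List.head?_append_of_ne_nil _ (ne_nil ⟨hc, hh, hl⟩)]

theorem exists_prefix (hp : IsDirPath R p u v) {x : α} (hx : x ∈ p) :
    ∃ q, q <+: p ∧ IsDirPath R q u x := by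
  obtain ⟨a, b, rfl⟩ := List.append_of_mem hx
  obtain ⟨hc, hh, -⟩ := hp
  rw [← List.singleton_append, ← List.append_assoc] at hc hh
  refine ⟨a ++ [x], ⟨b, by simp⟩, hc.left_of_append, ?_, List.getLast?_concat⟩
  rwa [List.head?_append_of_ne_nil _ (by simp)] at hh

theorem eq_concat (hp : IsDirPath R p u v) (huv : u ≠ v) :
    ∃ q y, IsDirPath R q u y ∧ R y v ∧ p = q ++ [v] := by
  obtain ⟨hc, hh, hl⟩ := hp
  replace hc : p.IsChain R := hc
  rcases List.eq_nil_or_concat' p with rfl | ⟨q, x, rfl⟩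
  · simp at hh
  obtain rfl : x = v := by simpa using hl
  rcases List.eq_nil_or_concat' q with rfl | ⟨q', y, rfl⟩
  · simp_all
  refine ⟨q' ++ [y], y, ⟨hc.left_of_append, ?_, List.getLast?_concat⟩, ?_, rfl⟩
  · rwa [List.head?_append_of_ne_nil _ (by simp)] at hh
  · exact (List.isChain_append.1 hc).2.2 y (by simp) x (by simp)

theorem apply_eq_apply_add_length {f : α → ZMod 2} (hf : ∀ a b, R a b → f b = f a + 1)
    (hp : IsDirPath R p u v) : f v = f u + (p.length - 1 : ℕ) := by
  obtain ⟨hc, hh, hl⟩ := hp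
  replace hc : p.IsChain R := hc
  induction p generalizing u with
  | nil => simp at hh
  | cons a t ih =>
    obtain rfl : a = u := by simpa using hh
    rcases t with _ | ⟨b, t⟩
    · simp_all
    rw [List.isChain_cons_cons] at hc
    rw [ih rfl (by simpa using hl) hc.2, hf _ _ hc.1]
    simp only [List.length_cons, Nat.add_sub_cancel]
    push_cast
    ring

end IsDirPath

theorem StronglySimple.sublist {p q : List (GMNode V)} (hp : StronglySimple p) (h : q.Sublist p) :
    StronglySimple q :=
  ⟨hp.1.sublist h, fun v hv => hp.2 v ⟨h.mem hv.1, h.mem hv.2⟩⟩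

theorem StronglySimple.concat {q : List (GMNode V)} (hq : StronglySimple q) {w : V} (X : Lbl)
    (hA : GMNode.inner w .A ∉ q) (hB : GMNode.inner w .B ∉ q) :
    StronglySimple (q ++ [GMNode.inner w X]) := by
  refine ⟨hq.1.append (List.nodup_singleton _) ?_, fun v ⟨hvA, hvB⟩ => ?_⟩
  · cases X <;> simpa
  · by_cases hvw : v = w
    · subst hvw
      cases X <;> simp_all
    · simp only [List.mem_append, List.mem_singleton, GMNode.inner.injEq, hvw, false_and,
        or_false] at hvA hvB
      exact hq.2 v ⟨hvA, hvB⟩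

def GMNode.parity : GMNode V → ZMod 2
  | .inner _ .B | .t => 1
  | .inner _ .A | .s => 0

theorem GMNode.parity_of_gmAdj {G : SimpleGraph V} {M : Set (Sym2 V)} (x y : GMNode V)
    (h : gmAdj G M x y) : y.parity = x.parity + 1 := by
  rcases x with ⟨_, _ | _⟩ | _ | _ <;> rcases y with ⟨_, _ | _⟩ | _ | _ <;>
    first | rfl | exact h.elim

theorem exists_eq_inner_B_of_gmAdj_inner_A {G : SimpleGraph V} {M : Set (Sym2 V)} {x : GMNode V}
    {w : V} (h : gmAdj G M x (.inner w .A)) : ∃ v, x = .inner v .B := by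
  rcases x with ⟨v, _ | _⟩ | _ | _
  exacts [h.elim, ⟨v, rfl⟩, h.elim, h.elim]

section Levels

variable {G : SimpleGraph V} {M : Set (Sym2 V)} {p : List (GMNode V)} {x y : GMNode V}

theorem gmLevel_le (hp : IsDirPath (gmAdj G M) p .s x) (hss : StronglySimple p) :
    gmLevel G M x ≤ (p.length - 1 : ℕ) :=
  sInf_le ⟨p, ⟨hp, hss⟩, rfl⟩

theorem le_gmLevel {k : ℕ}
    (h : ∀ p, IsDirPath (gmAdj G M) p .s x → StronglySimple p → k ≤ p.length - 1) :
    (k : ℕ∞) ≤ gmLevel G M x :=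
  le_sInf <| by
    rintro _ ⟨p, ⟨hp, hss⟩, rfl⟩
    exact Nat.cast_le.2 (h p hp hss)

theorem IsShortestSSP.length_eq {n : ℕ} (hp : IsShortestSSP G M p x) (h : gmLevel G M x = n) :
    p.length = n + 1 := by
  have hpos := List.length_pos_iff.2 hp.1.ne_nil
  have : p.length - 1 = n := by exact_mod_cast hp.2.2.symm.trans h
  omega

theorem exists_isShortestSSP {n : ℕ} (h : gmLevel G M x = n) : ∃ p, IsShortestSSP G M p x := by
  have hne : ((fun p : List (GMNode V) => ((p.length - 1 : ℕ) : ℕ∞)) ''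
      {p | IsDirPath (gmAdj G M) p .s x ∧ StronglySimple p}).Nonempty := by
    by_contra hempty
    rw [Set.not_nonempty_iff_eq_empty] at hempty
    rw [gmLevel, hempty, sInf_empty] at h
    exact ENat.top_ne_natCast n h
  obtain ⟨p, ⟨hp, hss⟩, hlen⟩ := csInf_mem hne
  exact ⟨p, hp, hss, hlen.symm⟩

theorem gmLevel_le_of_mem (hp : IsDirPath (gmAdj G M) p .s y) (hss : StronglySimple p)
    (hx : x ∈ p) : gmLevel G M x ≤ (p.length - 1 : ℕ) := by
  obtain ⟨q, hqp, hq⟩ := hp.exists_prefix hx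
  calc gmLevel G M x ≤ (q.length - 1 : ℕ) := gmLevel_le hq (hss.sublist hqp.sublist)
    _ ≤ (p.length - 1 : ℕ) := by gcongr; exact hqp.length_le

theorem odd_of_gmLevel_inner_B_eq {w : V} {n : ℕ} (h : gmLevel G M (.inner w .B) = n) :
    Odd n := by
  obtain ⟨p, hp⟩ := exists_isShortestSSP h
  have := hp.1.apply_eq_apply_add_length GMNode.parity_of_gmAdj
  rw [hp.length_eq h, Nat.add_sub_cancel] at this
  exact ZMod.natCast_eq_one_iff_odd.1 (by simpa [GMNode.parity] using this.symm)

/-- Neither `[w,A]` nor `[w,B]` lies on `q`: their levels exceed its length. -/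
theorem isShortestSSP_concat {q : List (GMNode V)} {v w : V} {n : ℕ}
    (hq : IsDirPath (gmAdj G M) q .s (.inner v .B)) (hss : StronglySimple q)
    (hlen : q.length = n + 1) (hadj : gmAdj G M (.inner v .B) (.inner w .A))
    (hA : (n : ℕ∞) < gmLevel G M (.inner w .A))
    (hB : (n : ℕ∞) < gmLevel G M (.inner w .B)) :
    IsShortestSSP G M (q ++ [.inner w .A]) (.inner w .A) := by
  have not_mem {X : Lbl} (hX : (n : ℕ∞) < gmLevel G M (.inner w X)) : .inner w X ∉ q :=
    fun hmem => (gmLevel_le_of_mem hq hss hmem).not_gt (by simpa [hlen] using hX)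
  have hp := hq.concat hadj
  have hssp := hss.concat .A (not_mem hA) (not_mem hB)
  refine ⟨hp, hssp, le_antisymm (gmLevel_le hp hssp) ?_⟩
  simpa [hlen] using Order.add_one_le_of_lt hA

/-- A shorter path to `[v,B]` would extend, by `isShortestSSP_concat`, to a path to `[w,A]` shorter
than its level. -/
theorem IsShortestSSP.eq_concat {w : V} {n : ℕ} (hp : IsShortestSSP G M p (.inner w .A))
    (hA : gmLevel G M (.inner w .A) = (n + 1 : ℕ))
    (hB : ((n + 1 : ℕ) : ℕ∞) < gmLevel G M (.inner w .B)) :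
    ∃ (v : V) (q : List (GMNode V)), gmLevel G M (.inner v .B) = n ∧
      gmAdj G M (.inner v .B) (.inner w .A) ∧ IsShortestSSP G M q (.inner v .B) ∧
      p = q ++ [.inner w .A] := by
  obtain ⟨q, y, hq, hadj, rfl⟩ := hp.1.eq_concat (by simp)
  obtain ⟨v, rfl⟩ := exists_eq_inner_B_of_gmAdj_inner_A hadj
  have hqlen : q.length = n + 1 := by simpa using hp.length_eq hA
  have hss := hp.2.1.sublist (List.sublist_append_left q _)
  have hv : gmLevel G M (.inner v .B) = n := by
    refine le_antisymm (by simpa [hqlen] using gmLevel_le hq hss) (le_gmLevel fun q' hq' hss' => ?_)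
    obtain ⟨m, hm⟩ := Nat.exists_eq_add_one.2 (List.length_pos_iff.2 hq'.ne_nil)
    rw [hm, Nat.add_sub_cancel]
    by_contra! hmn
    have hmn' : ((m : ℕ) : ℕ∞) < (n + 1 : ℕ) := by exact_mod_cast Nat.lt_succ_of_lt hmn
    have := (isShortestSSP_concat hq' hss' hm hadj (hA ▸ hmn') (hmn'.trans hB)).2.2
    rw [hA, List.length_append, hm] at this
    simp at this
    omega
  exact ⟨v, q, hv, hadj, ⟨hq, hss, by rw [hv, hqlen, Nat.add_sub_cancel]⟩, rfl⟩

theorem isShortestSSP_inner_A_iff {w : V} {n : ℕ}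
    (hA : gmLevel G M (.inner w .A) = (n + 1 : ℕ))
    (hB : ((n + 1 : ℕ) : ℕ∞) < gmLevel G M (.inner w .B)) :
    IsShortestSSP G M p (.inner w .A) ↔
      ∃ (v : V) (q : List (GMNode V)), gmLevel G M (.inner v .B) = n ∧
        gmAdj G M (.inner v .B) (.inner w .A) ∧ IsShortestSSP G M q (.inner v .B) ∧
        p = q ++ [.inner w .A] := by
  refine ⟨fun hp => hp.eq_concat hA hB, ?_⟩
  rintro ⟨v, q, hv, hadj, hq, rfl⟩
  have hsucc : (n : ℕ∞) < (n + 1 : ℕ) := by exact_mod_cast n.lt_succ_self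
  exact isShortestSSP_concat hq.1 hq.2.1 (hq.length_eq hv) hadj (hA ▸ hsucc) (hsucc.trans hB)

theorem first_level_inner_A_iff {w : V} {l : ℕ} (hl : Odd l) :
    (gmLevel G M (.inner w .A) = (l + 1 : ℕ) ∧
        gmLevel G M (.inner w .A) < gmLevel G M (.inner w .B)) ↔
      ((l : ℕ∞) < gmLevel G M (.inner w .A) ∧ (l : ℕ∞) < gmLevel G M (.inner w .B) ∧
        ∃ v : V, gmLevel G M (.inner v .B) = l ∧ gmAdj G M (.inner v .B) (.inner w .A)) := by
  have hsucc : (l : ℕ∞) < (l + 1 : ℕ) := by exact_mod_cast l.lt_succ_self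
  constructor
  · rintro ⟨hA, hAB⟩
    obtain ⟨p, hp⟩ := exists_isShortestSSP hA
    obtain ⟨v, -, hv, hadj, -⟩ := hp.eq_concat hA (hA ▸ hAB)
    exact ⟨hA ▸ hsucc, hsucc.trans (hA ▸ hAB), v, hv, hadj⟩
  · rintro ⟨hwA, hwB, v, hv, hadj⟩
    obtain ⟨q, hq⟩ := exists_isShortestSSP hv
    have hA : gmLevel G M (.inner w .A) = (l + 1 : ℕ) := by
      simpa [hq.length_eq hv] using
        (isShortestSSP_concat hq.1 hq.2.1 (hq.length_eq hv) hadj hwA hwB).2.2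
    refine ⟨hA, hA ▸ lt_of_le_of_ne ?_ fun h => ?_⟩
    · exact_mod_cast Order.add_one_le_of_lt hwB
    · exact Nat.not_odd_iff_even.2 hl.add_one (odd_of_gmLevel_inner_B_eq h.symm)

end Levels

theorem first_level_odd_step_general (G : SimpleGraph V) (M : Set (Sym2 V))
    (l : ℕ) (hl : Odd l) (w : V) :
    ((gmLevel G M (.inner w .A) = ((l + 1 : ℕ) : ℕ∞) ∧
        gmLevel G M (.inner w .A) < gmLevel G M (.inner w .B)) ↔
      ((l : ℕ∞) < gmLevel G M (.inner w .A) ∧ (l : ℕ∞) < gmLevel G M (.inner w .B) ∧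
        ∃ v : V, gmLevel G M (.inner v .B) = (l : ℕ∞) ∧
          gmAdj G M (.inner v .B) (.inner w .A))) ∧
    ((gmLevel G M (.inner w .A) = ((l + 1 : ℕ) : ℕ∞) ∧
        gmLevel G M (.inner w .A) < gmLevel G M (.inner w .B)) →
      ∀ p : List (GMNode V),
        IsShortestSSP G M p (.inner w .A) ↔
          ∃ (v : V) (q : List (GMNode V)),
            gmLevel G M (.inner v .B) = (l : ℕ∞) ∧
            gmAdj G M (.inner v .B) (.inner w .A) ∧
            IsShortestSSP G M q (.inner v .B) ∧
            p = q ++ [.inner w .A]) :=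
  ⟨first_level_inner_A_iff hl, fun h _ => isShortestSSP_inner_A_iff h.1 (h.1 ▸ h.2)⟩

/-- Let `l` be odd and `w ∈ V`.  Then `level([w,A]) = l+1` is the first level
of `w` iff `level([w,A]) > l`, `level([w,B]) > l` (undefined levels counting
as `⊤ > l`) and there is a node `[v,B]` with `level([v,B]) = l` and
`([v,B],[w,A]) ∈ E_M`.  In this case the shortest strongly simple paths from
`s` to `[w,A]` are exactly the shortest strongly simple paths from `s` to such
nodes `[v,B]`, each followed by the edge `([v,B],[w,A])`. -/
theorem first_level_odd_step (G : SimpleGraph V) (M : Set (Sym2 V))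
    (hM : IsMatchingOn G M) (l : ℕ) (hl : Odd l) (w : V) :
    ((gmLevel G M (.inner w .A) = ((l + 1 : ℕ) : ℕ∞) ∧
        gmLevel G M (.inner w .A) < gmLevel G M (.inner w .B)) ↔
      ((l : ℕ∞) < gmLevel G M (.inner w .A) ∧ (l : ℕ∞) < gmLevel G M (.inner w .B) ∧
        ∃ v : V, gmLevel G M (.inner v .B) = (l : ℕ∞) ∧
          gmAdj G M (.inner v .B) (.inner w .A))) ∧
    ((gmLevel G M (.inner w .A) = ((l + 1 : ℕ) : ℕ∞) ∧
        gmLevel G M (.inner w .A) < gmLevel G M (.inner w .B)) →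
      ∀ p : List (GMNode V),
        IsShortestSSP G M p (.inner w .A) ↔
          ∃ (v : V) (q : List (GMNode V)),
            gmLevel G M (.inner v .B) = (l : ℕ∞) ∧
            gmAdj G M (.inner v .B) (.inner w .A) ∧
            IsShortestSSP G M q (.inner v .B) ∧
            p = q ++ [.inner w .A]) :=
  first_level_odd_step_general G M l hl w
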